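/- arXiv:1902.05711 — 6 statements merged into one kernel-verified Lean document; each statement's English description precedes it below -/
import Mathlib

section
/- Let ξ₁ and η be lightlike vectors in ℝ⁴ (i.e., in the Minkowski space ℝ^{1+3}). Then for every ε > 0 there exist lightlike vectors ξ₂, ξ₃ ∈ ℝ⁴ with |ξ₂ − ξ₁| < ε and |ξ₃ − ξ₁| < ε such that η lies in the linear span of ξ₁, ξ₂, ξ₃. -/
/-- A vector in Minkowski space `ℝ^{1+3}` is *lightlike* if it is nonzero and the
Minkowski quadratic form `-ξ₀² + ξ₁² + ξ₂² + ξ₃²` vanishes on it. -/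
def IsLightlike (ξ : EuclideanSpace ℝ (Fin 4)) : Prop :=
  ξ ≠ 0 ∧ -(ξ 0) ^ 2 + (ξ 1) ^ 2 + (ξ 2) ^ 2 + (ξ 3) ^ 2 = 0

/-!
Write `ξ₁ = t e₀ + U` with `U ⊥ e₀` and `‖U‖ = |t| ≠ 0`, and choose `W ⊥ e₀, U` with `‖W‖ = |t|`
such that `η ∈ span {e₀, U, W}`; space being three-dimensional leaves room for `W`. Rotating `U`
towards `±W` by a small angle `θ` stays on the light cone and moves `ξ₁` only slightly, while
`t e₀ + U` and `t e₀ + cos θ U ± sin θ W` span all of `span {e₀, U, W}` as soon as `sin θ ≠ 0`.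
-/

open RealInnerProductSpace Module Filter Topology

noncomputable def rotatedLightlike {M : Type*} [AddCommGroup M] [Module ℝ M]
    (t : ℝ) (e U W : M) (θ : ℝ) : M :=
  t • e + (Real.cos θ • U + Real.sin θ • W)

theorem span_le_span_rotatedLightlike {M : Type*} [AddCommGroup M] [Module ℝ M] {e U W : M}
    {t θ : ℝ} (ht : t ≠ 0) (hθ : Real.sin θ ≠ 0) :
    Submodule.span ℝ {e, U, W} ≤ Submodule.span ℝ {rotatedLightlike t e U W 0,
      rotatedLightlike t e U W θ, rotatedLightlike t e U W (-θ)} := by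
  have hc : 1 - Real.cos θ ≠ 0 := by
    intro h
    apply hθ
    nlinarith [Real.sin_sq_add_cos_sq θ]
  simp only [Submodule.span_le, Set.insert_subset_iff, Set.singleton_subset_iff, SetLike.mem_coe,
    Submodule.mem_span_triple, rotatedLightlike, Real.cos_neg, Real.sin_neg, Real.cos_zero,
    Real.sin_zero]
  -- With `ξ, ξ₊, ξ₋` the three vectors: `ξ₊ - ξ₋ = 2 sin θ • W`, `2ξ - ξ₊ - ξ₋ = 2(1 - cos θ) • U`.
  refine ⟨⟨-Real.cos θ / ((1 - Real.cos θ) * t), 1 / (2 * t * (1 - Real.cos θ)),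
      1 / (2 * t * (1 - Real.cos θ)), ?_⟩,
    ⟨1 / (1 - Real.cos θ), -1 / (2 * (1 - Real.cos θ)), -1 / (2 * (1 - Real.cos θ)), ?_⟩,
    ⟨0, 1 / (2 * Real.sin θ), -1 / (2 * Real.sin θ), ?_⟩⟩ <;>
  · match_scalars <;> field_simp <;> ring

variable {E : Type*} [NormedAddCommGroup E] [InnerProductSpace ℝ E]

theorem Submodule.exists_mem_orthogonal_norm_eq_mem_sup_span (K : Submodule ℝ E)
    [K.HasOrthogonalProjection] (hK : K ≠ ⊤) (x : E) {a : ℝ} (ha : 0 < a) :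
    ∃ w ∈ Kᗮ, ‖w‖ = a ∧ x ∈ K ⊔ ℝ ∙ w := by
  obtain ⟨y, hy, z, hz, rfl⟩ := K.exists_add_mem_mem_orthogonal x
  obtain ⟨v, hv, hv0, hzv⟩ : ∃ v ∈ Kᗮ, v ≠ 0 ∧ z ∈ ℝ ∙ v := by
    by_cases hz0 : z = 0
    · obtain ⟨v, hv, hv0⟩ :=
        Submodule.exists_mem_ne_zero_of_ne_bot (mt K.orthogonal_eq_bot_iff.mp hK)
      exact ⟨v, hv, hv0, hz0 ▸ Submodule.zero_mem _⟩
    · exact ⟨z, hz, hz0, Submodule.mem_span_singleton_self z⟩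
  have hv0' : ‖v‖ ≠ 0 := norm_ne_zero_iff.mpr hv0
  refine ⟨(a / ‖v‖) • v, Kᗮ.smul_mem _ hv, ?_, ?_⟩
  · rw [norm_smul, Real.norm_of_nonneg (by positivity), div_mul_cancel₀ _ hv0']
  · rw [Submodule.span_singleton_smul_eq (isUnit_iff_ne_zero.mpr (div_ne_zero ha.ne' hv0'))]
    exact Submodule.add_mem_sup hy hzv

theorem finrank_span_pair_le (x y : E) : finrank ℝ (Submodule.span ℝ {x, y}) ≤ 2 := by
  classical
  exact (finrank_span_le_card _).trans (by simp [Set.toFinset_insert, Finset.card_le_two])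

theorem norm_cos_smul_add_sin_smul {U W : E} (hUW : ⟪U, W⟫ = 0) (hW : ‖W‖ = ‖U‖) (θ : ℝ) :
    ‖Real.cos θ • U + Real.sin θ • W‖ = ‖U‖ := by
  have h : ‖Real.cos θ • U + Real.sin θ • W‖ ^ 2 = ‖U‖ ^ 2 := by
    rw [norm_add_sq_real, real_inner_smul_left, real_inner_smul_right, hUW, norm_smul, norm_smul,
      hW, mul_pow, mul_pow, Real.norm_eq_abs, Real.norm_eq_abs, sq_abs, sq_abs]
    linear_combination ‖U‖ ^ 2 * Real.cos_sq_add_sin_sq θ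
  exact (pow_left_inj₀ (norm_nonneg _) (norm_nonneg _) two_ne_zero).mp h

/-- For a unit vector `e`, `‖x‖² - 2⟪e, x⟫² = -⟪e, x⟫² + ‖x - ⟪e, x⟫ • e‖²` is the Minkowski form
with time axis `ℝ e`. -/
def IsLightlikeWrt (e x : E) : Prop :=
  x ≠ 0 ∧ ‖x‖ ^ 2 = 2 * ⟪e, x⟫ ^ 2

namespace IsLightlikeWrt

variable {e x : E}

theorem inner_ne_zero (hx : IsLightlikeWrt e x) : ⟪e, x⟫ ≠ 0 := by
  intro h
  apply hx.1
  simpa [h] using hx.2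

theorem norm_sub_inner_smul (he : ‖e‖ = 1) (hx : IsLightlikeWrt e x) :
    ‖x - ⟪e, x⟫ • e‖ = |⟪e, x⟫| := by
  have h : ‖x - ⟪e, x⟫ • e‖ ^ 2 = |⟪e, x⟫| ^ 2 := by
    rw [norm_sub_sq_real, hx.2, real_inner_smul_right, real_inner_comm, norm_smul, he,
      Real.norm_eq_abs, mul_one, sq_abs]
    ring
  exact (pow_left_inj₀ (norm_nonneg _) (abs_nonneg _) two_ne_zero).mp h

end IsLightlikeWrt

section Rotation

variable {e U W : E} {t : ℝ}

theorem rotatedLightlike_zero : rotatedLightlike t e U W 0 = t • e + U := by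
  simp [rotatedLightlike]

theorem continuous_rotatedLightlike : Continuous (rotatedLightlike t e U W) := by
  unfold rotatedLightlike
  fun_prop

theorem eventually_norm_rotatedLightlike_sub_lt {ε : ℝ} (hε : 0 < ε) :
    ∀ᶠ θ in 𝓝[>] 0, ‖rotatedLightlike t e U W θ - rotatedLightlike t e U W 0‖ < ε ∧
      ‖rotatedLightlike t e U W (-θ) - rotatedLightlike t e U W 0‖ < ε ∧ Real.sin θ ≠ 0 := by
  have hnear : ∀ᶠ θ in 𝓝 0,
      dist (rotatedLightlike t e U W θ) (rotatedLightlike t e U W 0) < ε :=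
    Metric.tendsto_nhds.mp (continuous_rotatedLightlike.tendsto 0) ε hε
  have hnear_neg : ∀ᶠ θ in 𝓝 (0 : ℝ),
      dist (rotatedLightlike t e U W (-θ)) (rotatedLightlike t e U W 0) < ε := by
    simpa using (continuous_neg.tendsto (0 : ℝ)).eventually (by simpa using hnear)
  have hsin : ∀ᶠ θ in 𝓝[>] 0, Real.sin θ ≠ 0 :=
    mem_of_superset (Ioo_mem_nhdsGT Real.pi_pos)
      fun θ hθ ↦ (Real.sin_pos_of_pos_of_lt_pi hθ.1 hθ.2).ne'
  simp only [dist_eq_norm] at hnear hnear_neg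
  exact (eventually_nhdsWithin_of_eventually_nhds hnear).and
    ((eventually_nhdsWithin_of_eventually_nhds hnear_neg).and hsin)

theorem isLightlikeWrt_rotatedLightlike (he : ‖e‖ = 1) (heU : ⟪e, U⟫ = 0) (heW : ⟪e, W⟫ = 0)
    (hUW : ⟪U, W⟫ = 0) (hU : ‖U‖ = |t|) (hW : ‖W‖ = |t|) (ht : t ≠ 0) (θ : ℝ) :
    IsLightlikeWrt e (rotatedLightlike t e U W θ) := by
  have htime : ⟪e, rotatedLightlike t e U W θ⟫ = t := by
    simp only [rotatedLightlike, inner_add_right, real_inner_smul_right,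
      real_inner_self_eq_norm_sq, he, heU, heW]
    ring
  have hperp : ⟪t • e, Real.cos θ • U + Real.sin θ • W⟫ = 0 := by
    simp only [inner_add_right, real_inner_smul_left, real_inner_smul_right, heU, heW]
    ring
  refine ⟨fun h ↦ ht (by rw [← htime, h, inner_zero_right]), ?_⟩
  rw [htime, rotatedLightlike, norm_add_sq_real, hperp,
    norm_cos_smul_add_sin_smul hUW (hW.trans hU.symm), hU, norm_smul, he, Real.norm_eq_abs,
    mul_one, sq_abs]
  ring

end Rotation

theorem exists_isLightlikeWrt_near_mem_span [FiniteDimensional ℝ E] (hE : 3 ≤ finrank ℝ E)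
    {e ξ : E} (he : ‖e‖ = 1) (hξ : IsLightlikeWrt e ξ) (η : E) {ε : ℝ} (hε : 0 < ε) :
    ∃ ξ₂ ξ₃, IsLightlikeWrt e ξ₂ ∧ IsLightlikeWrt e ξ₃ ∧ ‖ξ₂ - ξ‖ < ε ∧ ‖ξ₃ - ξ‖ < ε ∧
      η ∈ Submodule.span ℝ {ξ, ξ₂, ξ₃} := by
  set t := ⟪e, ξ⟫
  have ht : t ≠ 0 := hξ.inner_ne_zero
  set U := ξ - t • e
  have hU : ‖U‖ = |t| := hξ.norm_sub_inner_smul he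
  have heU : ⟪e, U⟫ = 0 := by
    simp only [U, inner_sub_right, real_inner_smul_right, real_inner_self_eq_norm_sq, he]
    ring
  set K := Submodule.span ℝ {e, U}
  have hK : K ≠ ⊤ := fun h ↦ by
    have : finrank ℝ K ≤ 2 := finrank_span_pair_le e U
    rw [h, finrank_top] at this
    omega
  obtain ⟨W, hWK, hW, hηW⟩ := K.exists_mem_orthogonal_norm_eq_mem_sup_span hK η (abs_pos.mpr ht)
  have heW : ⟪e, W⟫ = 0 := K.inner_right_of_mem_orthogonal (Submodule.subset_span (by simp)) hWK
  have hUW : ⟪U, W⟫ = 0 := K.inner_right_of_mem_orthogonal (Submodule.subset_span (by simp)) hWK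
  have hξ₀ : rotatedLightlike t e U W 0 = ξ := by simp [rotatedLightlike_zero, U]
  have hnear := eventually_norm_rotatedLightlike_sub_lt (t := t) (e := e) (U := U) (W := W) hε
  rw [hξ₀] at hnear
  obtain ⟨θ, hθ, hθneg, hsin⟩ := hnear.exists
  refine ⟨_, _, isLightlikeWrt_rotatedLightlike he heU heW hUW hU hW ht θ,
    isLightlikeWrt_rotatedLightlike he heU heW hUW hU hW ht (-θ), hθ, hθneg, ?_⟩
  rw [← hξ₀]
  refine span_le_span_rotatedLightlike ht hsin ?_
  refine (sup_le ?_ ?_ : K ⊔ ℝ ∙ W ≤ Submodule.span ℝ {e, U, W}) hηW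
  · exact Submodule.span_mono (by intro x; simp; tauto)
  · exact Submodule.span_mono (by simp)

theorem isLightlike_iff_isLightlikeWrt (ξ : EuclideanSpace ℝ (Fin 4)) :
    IsLightlike ξ ↔ IsLightlikeWrt (EuclideanSpace.single 0 1) ξ := by
  rw [IsLightlike, IsLightlikeWrt, EuclideanSpace.norm_sq_eq, Fin.sum_univ_four,
    EuclideanSpace.inner_single_left]
  simp only [Real.norm_eq_abs, sq_abs, map_one, one_mul]
  constructor <;> rintro ⟨h0, h⟩ <;> exact ⟨h0, by linarith⟩

theorem stmt_0_general (ξ₁ η : EuclideanSpace ℝ (Fin 4))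
    (hξ₁ : IsLightlike ξ₁) :
    ∀ ε > 0, ∃ ξ₂ ξ₃ : EuclideanSpace ℝ (Fin 4),
      IsLightlike ξ₂ ∧ IsLightlike ξ₃ ∧
      ‖ξ₂ - ξ₁‖ < ε ∧ ‖ξ₃ - ξ₁‖ < ε ∧
      η ∈ Submodule.span ℝ ({ξ₁, ξ₂, ξ₃} : Set (EuclideanSpace ℝ (Fin 4))) := by
  intro ε hε
  simp only [isLightlike_iff_isLightlikeWrt] at hξ₁ ⊢
  exact exists_isLightlikeWrt_near_mem_span (by simp) (by simp) hξ₁ η hε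

/-- Lemma 3.2 of the paper: given lightlike `ξ₁` and `η` in Minkowski space, in any
neighbourhood of `ξ₁` there exist lightlike `ξ₂, ξ₃` with `η ∈ span(ξ₁, ξ₂, ξ₃)`. -/
theorem stmt_0 (ξ₁ η : EuclideanSpace ℝ (Fin 4))
    (hξ₁ : IsLightlike ξ₁) (hη : IsLightlike η) :
    ∀ ε > 0, ∃ ξ₂ ξ₃ : EuclideanSpace ℝ (Fin 4),
      IsLightlike ξ₂ ∧ IsLightlike ξ₃ ∧
      ‖ξ₂ - ξ₁‖ < ε ∧ ‖ξ₃ - ξ₁‖ < ε ∧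
      η ∈ Submodule.span ℝ ({ξ₁, ξ₂, ξ₃} : Set (EuclideanSpace ℝ (Fin 4))) :=
  stmt_0_general ξ₁ η hξ₁
end

section
/- Let a(r) = √(1 − r²), fix r₀ ∈ [−1,1] and r ∈ (0,1), and set ξ₁ = (1,1,0,0), ξ₂ = (1, a(r), r, 0), ξ₃ = (1, a(r), −r, 0), η = (1, −a(r₀), r₀, 0) in ℝ⁴. Then for every choice of two distinct indices j, k ∈ {1,2,3}, the vector η does NOT lie in the linear span of ξⱼ and ξₖ. -/
/-- The three lightlike vectors `ξ₁ = (1,1,0,0)`, `ξ₂ = (1,a(r),r,0)`,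
`ξ₃ = (1,a(r),-r,0)`, with `a(r) = √(1 - r²)`. -/
noncomputable def xiVec (r : ℝ) : Fin 3 → (Fin 4 → ℝ) :=
  ![![1, 1, 0, 0],
    ![1, Real.sqrt (1 - r ^ 2), r, 0],
    ![1, Real.sqrt (1 - r ^ 2), -r, 0]]

section aux

variable {r₀ r : ℝ}

lemma aux_facts (hr₀ : r₀ ∈ Set.Icc (-1 : ℝ) 1) (hr : r ∈ Set.Ioo (0 : ℝ) 1) :
    0 < Real.sqrt (1 - r ^ 2) ∧ Real.sqrt (1 - r ^ 2) ^ 2 = 1 - r ^ 2 ∧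
    0 ≤ Real.sqrt (1 - r₀ ^ 2) ∧ 1 - Real.sqrt (1 - r ^ 2) < r := by
  obtain ⟨hr1, hr2⟩ := hr
  have h1 : (0:ℝ) < 1 - r ^ 2 := by nlinarith
  have ha : 0 < Real.sqrt (1 - r ^ 2) := Real.sqrt_pos.mpr h1
  have ha2 : Real.sqrt (1 - r ^ 2) ^ 2 = 1 - r ^ 2 := Real.sq_sqrt (le_of_lt h1)
  refine ⟨ha, ha2, Real.sqrt_nonneg _, ?_⟩
  nlinarith [mul_pos hr1 ha]

lemma not_mem_12 (hr₀ : r₀ ∈ Set.Icc (-1 : ℝ) 1) (hr : r ∈ Set.Ioo (0 : ℝ) 1) :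
    (![1, -Real.sqrt (1 - r₀ ^ 2), r₀, 0] : Fin 4 → ℝ)
      ∉ Submodule.span ℝ ({xiVec r 0, xiVec r 1} : Set (Fin 4 → ℝ)) := by
  obtain ⟨ha, ha2, ha0, hda⟩ := aux_facts hr₀ hr
  set a := Real.sqrt (1 - r ^ 2)
  set a₀ := Real.sqrt (1 - r₀ ^ 2)
  rw [Submodule.mem_span_pair]
  rintro ⟨c, d, h⟩
  have h0 := congrFun h 0
  have h1 := congrFun h 1
  have h2 := congrFun h 2
  simp [xiVec, Pi.smul_apply, smul_eq_mul] at h0 h1 h2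
  -- h0 : c + d = 1, h1 : c + d * a = -a₀, h2 : d * r = r₀
  have hd : d - d * a = 1 + a₀ := by linarith
  have hdpos : 0 < d := by nlinarith
  have : d * (1 - a) < d * r := by
    apply mul_lt_mul_of_pos_left hda hdpos
  nlinarith [hr₀.2]

lemma not_mem_13 (hr₀ : r₀ ∈ Set.Icc (-1 : ℝ) 1) (hr : r ∈ Set.Ioo (0 : ℝ) 1) :
    (![1, -Real.sqrt (1 - r₀ ^ 2), r₀, 0] : Fin 4 → ℝ)
      ∉ Submodule.span ℝ ({xiVec r 0, xiVec r 2} : Set (Fin 4 → ℝ)) := by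
  obtain ⟨ha, ha2, ha0, hda⟩ := aux_facts hr₀ hr
  set a := Real.sqrt (1 - r ^ 2)
  set a₀ := Real.sqrt (1 - r₀ ^ 2)
  rw [Submodule.mem_span_pair]
  rintro ⟨c, d, h⟩
  have h0 := congrFun h 0
  have h1 := congrFun h 1
  have h2 := congrFun h 2
  simp [xiVec, Pi.smul_apply, smul_eq_mul] at h0 h1 h2
  -- h0 : c + d = 1, h1 : c + d * a = -a₀, h2 : d * -r = r₀
  have hd : d - d * a = 1 + a₀ := by linarith
  have hdpos : 0 < d := by nlinarith
  have : d * (1 - a) < d * r := by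
    apply mul_lt_mul_of_pos_left hda hdpos
  nlinarith [hr₀.1]

lemma not_mem_23 (hr₀ : r₀ ∈ Set.Icc (-1 : ℝ) 1) (hr : r ∈ Set.Ioo (0 : ℝ) 1) :
    (![1, -Real.sqrt (1 - r₀ ^ 2), r₀, 0] : Fin 4 → ℝ)
      ∉ Submodule.span ℝ ({xiVec r 1, xiVec r 2} : Set (Fin 4 → ℝ)) := by
  obtain ⟨ha, ha2, ha0, hda⟩ := aux_facts hr₀ hr
  set a := Real.sqrt (1 - r ^ 2)
  set a₀ := Real.sqrt (1 - r₀ ^ 2)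
  rw [Submodule.mem_span_pair]
  rintro ⟨c, d, h⟩
  have h0 := congrFun h 0
  have h1 := congrFun h 1
  simp [xiVec, Pi.smul_apply, smul_eq_mul] at h0 h1
  -- h0 : c + d = 1, h1 : c * a + d * a = -a₀
  have h0a : c * a + d * a = 1 * a := by rw [← add_mul, h0]
  nlinarith

end aux

/-- Remark 3.1 of the paper: the lightlike vector `η = (1, -a(r₀), r₀, 0)` does not
lie in the span of any two of the vectors `ξ₁, ξ₂, ξ₃`. -/
theorem stmt_5 (r₀ r : ℝ) (hr₀ : r₀ ∈ Set.Icc (-1 : ℝ) 1) (hr : r ∈ Set.Ioo (0 : ℝ) 1) :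
    ∀ j k : Fin 3, j ≠ k →
      (![1, -Real.sqrt (1 - r₀ ^ 2), r₀, 0] : Fin 4 → ℝ)
        ∉ Submodule.span ℝ ({xiVec r j, xiVec r k} : Set (Fin 4 → ℝ)) := by
  intro j k hjk
  fin_cases j <;> fin_cases k
  · exact absurd rfl hjk
  · exact not_mem_12 hr₀ hr
  · exact not_mem_13 hr₀ hr
  · rw [Set.pair_comm]; exact not_mem_12 hr₀ hr
  · exact absurd rfl hjk
  · exact not_mem_23 hr₀ hr
  · rw [Set.pair_comm]; exact not_mem_13 hr₀ hr
  · rw [Set.pair_comm]; exact not_mem_23 hr₀ hr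
  · exact absurd rfl hjk
end

section
/- Let s > 0 and r ∈ (0,1). Set r₁ = 0, r₂ = r, r₃ = −r, and for j = 1,2,3 define xⱼ' = (−s√(1 − rⱼ²), −s rⱼ, 0) ∈ ℝ³ and the cone Kⱼ = {(t, x') ∈ ℝ × ℝ³ : t > −s and |x' − xⱼ'| = t + s}. Then K₁ ∩ K₂ ∩ K₃ = {(−s + √(s² + z²), (0, 0, z)) : z ∈ ℝ}. -/
/-- The Euclidean norm on `ℝ³`. -/
noncomputable def enorm3 (v : Fin 3 → ℝ) : ℝ := Real.sqrt (∑ i, v i ^ 2)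

lemma enorm3_eq (x : Fin 3 → ℝ) (a b c : ℝ) (hc : 0 ≤ c) :
    enorm3 (x - ![a, b, 0]) = c ↔
      (x 0 - a) ^ 2 + (x 1 - b) ^ 2 + (x 2) ^ 2 = c ^ 2 := by
  unfold enorm3
  rw [Fin.sum_univ_three]
  simp only [Pi.sub_apply, Matrix.cons_val_zero, Matrix.cons_val_one, Matrix.head_cons,
    Matrix.cons_val_two, Matrix.tail_cons, sub_zero]
  constructor
  · intro h
    rw [← h, Real.sq_sqrt (by positivity)]
  · intro h
    rw [h, Real.sqrt_sq hc]

set_option maxHeartbeats 1000000 in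
/-- The triple intersection of the three forward light cones emanating from the
points `xⱼ = (-s, xⱼ')`, `xⱼ' = (-s√(1-rⱼ²), -s rⱼ, 0)` with `r₁ = 0`, `r₂ = r`,
`r₃ = -r`, is the filament `{(-s + √(s² + z²), (0,0,z)) : z ∈ ℝ}` (Appendix C). -/
theorem stmt_7 (s r : ℝ) (hs : 0 < s) (hr : r ∈ Set.Ioo (0 : ℝ) 1) :
    (⋂ j : Fin 3, {p : ℝ × (Fin 3 → ℝ) |
        p.1 > -s ∧
        enorm3 (p.2 - ![-s * Real.sqrt (1 - (![0, r, -r] j : ℝ) ^ 2),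
          -s * (![0, r, -r] j : ℝ), 0]) = p.1 + s})
      = {p : ℝ × (Fin 3 → ℝ) |
          ∃ z : ℝ, p = (-s + Real.sqrt (s ^ 2 + z ^ 2), ![0, 0, z])} := by
  obtain ⟨hr0, hr1⟩ := hr
  have hrr : (0:ℝ) ≤ 1 - r ^ 2 := by nlinarith
  have hsq : Real.sqrt (1 - r ^ 2) ^ 2 = 1 - r ^ 2 := Real.sq_sqrt hrr
  have hlt1 : Real.sqrt (1 - r ^ 2) < 1 := by
    nlinarith [Real.sqrt_nonneg (1 - r ^ 2)]
  ext ⟨t, x⟩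
  simp only [Set.mem_iInter, Set.mem_setOf_eq]
  constructor
  · intro h
    obtain ⟨ht, h1⟩ := h 0
    obtain ⟨-, h2⟩ := h 1
    obtain ⟨-, h3⟩ := h 2
    have hts : (0:ℝ) ≤ t + s := by linarith
    simp only [Matrix.cons_val_zero, Matrix.cons_val_one, Matrix.head_cons,
      Matrix.cons_val_two, Matrix.tail_cons] at h1 h2 h3
    rw [enorm3_eq _ _ _ _ hts] at h1 h2 h3
    rw [show (1 - (-r) ^ 2 : ℝ) = 1 - r ^ 2 by ring] at h3
    norm_num [Real.sqrt_one] at h1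
    have h4 : s * r * x 1 = 0 := by linear_combination (h2 - h3) / 4
    have hx1 : x 1 = 0 := by
      rcases mul_eq_zero.mp h4 with h' | h'
      · nlinarith
      · exact h'
    have h5 : s * (1 - Real.sqrt (1 - r ^ 2)) * x 0 = 0 := by
      linear_combination (h1 - h2) / 2 + (s ^ 2 / 2) * hsq + (s * r) * hx1
    have hx0 : x 0 = 0 := by
      rcases mul_eq_zero.mp h5 with h' | h'
      · rcases mul_eq_zero.mp h' with h'' | h'' <;> nlinarith
      · exact h'
    rw [hx0, hx1] at h1
    have hE : s ^ 2 + x 2 ^ 2 = (t + s) ^ 2 := by nlinarith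
    refine ⟨x 2, ?_⟩
    have hts' : Real.sqrt (s ^ 2 + x 2 ^ 2) = t + s := by
      rw [hE, Real.sqrt_sq hts]
    rw [Prod.mk.injEq]
    constructor
    · linarith [hts']
    · funext i
      fin_cases i <;> simp [hx0, hx1]
  · rintro ⟨z, hp⟩
    rw [Prod.mk.injEq] at hp
    obtain ⟨hpt, hpx⟩ := hp
    have hsz : s ≤ Real.sqrt (s ^ 2 + z ^ 2) := by
      have h' := Real.sqrt_le_sqrt (show s ^ 2 ≤ s ^ 2 + z ^ 2 by nlinarith)
      rwa [Real.sqrt_sq hs.le] at h'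
    intro j
    have hρ2 : (![0, r, -r] j : ℝ) ^ 2 ≤ r ^ 2 := by
      fin_cases j <;> norm_num <;> nlinarith
    have ht : t > -s := by rw [hpt]; nlinarith
    refine ⟨ht, ?_⟩
    have hts : (0:ℝ) ≤ t + s := by linarith
    rw [enorm3_eq _ _ _ _ hts]
    have hx0 : x 0 = 0 := by rw [hpx]; simp
    have hx1 : x 1 = 0 := by rw [hpx]; simp
    have hx2 : x 2 = z := by rw [hpx]; simp
    have hts' : (t + s) ^ 2 = s ^ 2 + z ^ 2 := by
      rw [hpt]
      have h := Real.sq_sqrt (show (0:ℝ) ≤ s ^ 2 + z ^ 2 by positivity)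
      nlinarith
    set ρ : ℝ := ![0, r, -r] j with hρ
    have hρnn : (0:ℝ) ≤ 1 - ρ ^ 2 := by nlinarith
    have hsqρ : Real.sqrt (1 - ρ ^ 2) ^ 2 = 1 - ρ ^ 2 := Real.sq_sqrt hρnn
    rw [hx0, hx1, hx2, hts']
    nlinarith [hsqρ]
end

section
/- Let s > 0. Define T(z) = −s + √(s² + z²) and ε(z) = z/√(s² + z²) for z ∈ ℝ. Define F : (0,∞) × S¹ × ℝ → ℝ × ℝ² × ℝ by F(t, θ, z) = (T(z) + t, t√(1 − ε(z)²) θ, z + t ε(z)), where S¹ = {θ ∈ ℝ² : |θ| = 1}. Then F is injective. -/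
open Matrix

/-- `T(z) = -s + √(s² + z²)`, the time coordinate of the filament. -/
noncomputable def Tfil (s z : ℝ) : ℝ := -s + Real.sqrt (s ^ 2 + z ^ 2)

/-- `ε(z) = z / √(s² + z²) = T'(z)`. -/
noncomputable def epsFil (s z : ℝ) : ℝ := z / Real.sqrt (s ^ 2 + z ^ 2)

/-!
Write `r = √(s² + z²)`, so that `√(1 - ε²) = s / r` and `F(t, θ, z) = (r + t - s, (s t / r) θ,
z (1 + t / r))`. The length of the spatial component recovers `t / r`, the time component then
recovers `r (1 + t / r)` and hence `r` and `t`, the last component recovers `z`, and finally `θ`.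
-/

theorem sqrt_one_sub_epsFil_sq {s : ℝ} (hs : 0 < s) (z : ℝ) :
    Real.sqrt (1 - epsFil s z ^ 2) = s / Real.sqrt (s ^ 2 + z ^ 2) := by
  have hr : 0 < Real.sqrt (s ^ 2 + z ^ 2) := Real.sqrt_pos.mpr (by positivity)
  have hsq : Real.sqrt (s ^ 2 + z ^ 2) ^ 2 = s ^ 2 + z ^ 2 := Real.sq_sqrt (by positivity)
  have h : 1 - epsFil s z ^ 2 = (s / Real.sqrt (s ^ 2 + z ^ 2)) ^ 2 := by
    rw [epsFil, div_pow, div_pow, hsq]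
    field_simp
    ring
  rw [h, Real.sqrt_sq (by positivity)]

theorem add_mul_epsFil (s z t : ℝ) :
    z + t * epsFil s z = z * (1 + t / Real.sqrt (s ^ 2 + z ^ 2)) := by
  rw [epsFil]
  ring

theorem Matrix.eq_and_eq_of_smul_eq_smul_of_dotProduct_self_eq_one {ι : Type*} [Fintype ι]
    {a b : ℝ} {u v : ι → ℝ} (ha : 0 ≤ a) (hb : 0 < b) (hu : u ⬝ᵥ u = 1) (hv : v ⬝ᵥ v = 1)
    (h : a • u = b • v) : a = b ∧ u = v := by
  have hsq := congrArg (fun w => w ⬝ᵥ w) h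
  simp only [smul_dotProduct, dotProduct_smul, hu, hv, smul_eq_mul, mul_one] at hsq
  have hab : a = b := (mul_self_inj ha hb.le).mp hsq
  subst hab
  exact ⟨rfl, smul_right_injective _ hb.ne' h⟩

theorem eq_and_eq_of_add_eq_add_of_div_eq_div {r₁ r₂ t₁ t₂ : ℝ} (hr₁ : 0 < r₁) (hr₂ : 0 < r₂)
    (ht₂ : 0 ≤ t₂) (hsum : r₁ + t₁ = r₂ + t₂) (hratio : t₁ / r₁ = t₂ / r₂) :
    r₁ = r₂ ∧ t₁ = t₂ := by
  have hfactor (r t : ℝ) (hr : 0 < r) : r + t = r * (1 + t / r) := by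
    field_simp
  have hpos : 0 < 1 + t₂ / r₂ := by positivity
  have hr : r₁ = r₂ := by
    refine mul_right_cancel₀ hpos.ne' ?_
    rw [← hfactor r₂ t₂ hr₂, ← hsum, hfactor r₁ t₁ hr₁, hratio]
  subst hr
  exact ⟨rfl, by linarith⟩

/-- Appendix C of the paper: the parametrization
`F(t, θ, z) = (T(z) + t, t√(1-ε(z)²) θ, z + t ε(z))` of the projection of the future
flowout of the conormal bundle of the filament is injective on `(0,∞) × S¹ × ℝ`. -/
theorem stmt_8 (s : ℝ) (hs : 0 < s) (t₁ t₂ : ℝ) (θ₁ θ₂ : Fin 2 → ℝ) (z₁ z₂ : ℝ)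
    (ht₁ : 0 < t₁) (ht₂ : 0 < t₂) (hθ₁ : θ₁ ⬝ᵥ θ₁ = 1) (hθ₂ : θ₂ ⬝ᵥ θ₂ = 1)
    (h : (Tfil s z₁ + t₁, (t₁ * Real.sqrt (1 - epsFil s z₁ ^ 2)) • θ₁,
            z₁ + t₁ * epsFil s z₁)
        = (Tfil s z₂ + t₂, (t₂ * Real.sqrt (1 - epsFil s z₂ ^ 2)) • θ₂,
            z₂ + t₂ * epsFil s z₂)) :
    t₁ = t₂ ∧ θ₁ = θ₂ ∧ z₁ = z₂ := by
  simp only [Prod.mk.injEq, Tfil, add_mul_epsFil, sqrt_one_sub_epsFil_sq hs] at h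
  obtain ⟨htime, hspace, hz⟩ := h
  set r₁ := Real.sqrt (s ^ 2 + z₁ ^ 2)
  set r₂ := Real.sqrt (s ^ 2 + z₂ ^ 2)
  have hr₁ : 0 < r₁ := Real.sqrt_pos.mpr (by positivity)
  have hr₂ : 0 < r₂ := Real.sqrt_pos.mpr (by positivity)
  obtain ⟨hradial, hθ⟩ := eq_and_eq_of_smul_eq_smul_of_dotProduct_self_eq_one
    (by positivity) (by positivity) hθ₁ hθ₂ hspace
  have hratio : t₁ / r₁ = t₂ / r₂ := by
    refine mul_left_cancel₀ hs.ne' ?_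
    linear_combination hradial
  obtain ⟨-, ht⟩ := eq_and_eq_of_add_eq_add_of_div_eq_div hr₁ hr₂ ht₂.le (by linarith) hratio
  rw [hratio] at hz
  exact ⟨ht, hθ, mul_right_cancel₀ (by positivity) hz⟩
end

section
/- Let s > 0. Define T(z) = −s + √(s² + z²) and ε(z) = z/√(s² + z²), and define G : (0,∞) × ℝ × ℝ → ℝ⁴ by G(t, a, z) = (T(z) + t, t√(1 − ε(z)²) cos a, t√(1 − ε(z)²) sin a, z + t ε(z)). Then for every t > 0 and a ∈ ℝ, the (total) derivative of G at the point (t, a, 0) is an injective linear map from ℝ³ to ℝ⁴. -/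
/-- The angular parametrization `G(t, a, z)` of the projection of the future flowout
of the conormal bundle of the filament. -/
noncomputable def Gmap (s : ℝ) : ℝ × ℝ × ℝ → (Fin 4 → ℝ) := fun p =>
  ![Tfil s p.2.2 + p.1,
    p.1 * Real.sqrt (1 - epsFil s p.2.2 ^ 2) * Real.cos p.2.1,
    p.1 * Real.sqrt (1 - epsFil s p.2.2 ^ 2) * Real.sin p.2.1,
    p.2.2 + p.1 * epsFil s p.2.2]

open ContinuousLinearMap

lemma HasDerivAt.sqrt_one_sub_sq_of_eq_zero {f : ℝ → ℝ} {f' x : ℝ} (hf : HasDerivAt f f' x)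
    (hx : f x = 0) : HasDerivAt (fun y => √(1 - f y ^ 2)) 0 x := by
  simpa [hx] using ((hf.pow 2).const_sub 1).sqrt (by simp [hx])

lemma hasDerivAt_sqrt_sq_add_sq_zero {s : ℝ} (hs : s ≠ 0) :
    HasDerivAt (fun z => √(s ^ 2 + z ^ 2)) 0 0 := by
  simpa using ((hasDerivAt_pow 2 (0 : ℝ)).const_add (s ^ 2)).sqrt (by positivity)

lemma hasDerivAt_Tfil_zero {s : ℝ} (hs : s ≠ 0) : HasDerivAt (Tfil s) 0 0 :=
  (hasDerivAt_sqrt_sq_add_sq_zero hs).const_add (-s)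

lemma epsFil_zero (s : ℝ) : epsFil s 0 = 0 := by simp [epsFil]

lemma hasDerivAt_epsFil_zero {s : ℝ} (hs : s ≠ 0) : HasDerivAt (epsFil s) |s|⁻¹ 0 := by
  have hr : √(s ^ 2 + 0 ^ 2) = |s| := by simp [Real.sqrt_sq_eq_abs]
  refine ((hasDerivAt_id (0 : ℝ)).div (hasDerivAt_sqrt_sq_add_sq_zero hs)
    (by rw [hr]; positivity)).congr_deriv ?_
  rw [hr]; field_simp; simp

noncomputable def gmapFDerivZero (s t a : ℝ) : ℝ × ℝ × ℝ →L[ℝ] (Fin 4 → ℝ) :=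
  let dt := fst ℝ ℝ (ℝ × ℝ)
  let da := (fst ℝ ℝ ℝ).comp (snd ℝ ℝ (ℝ × ℝ))
  let dz := (snd ℝ ℝ ℝ).comp (snd ℝ ℝ (ℝ × ℝ))
  pi ![dt, Real.cos a • dt - (t * Real.sin a) • da, Real.sin a • dt + (t * Real.cos a) • da,
    (1 + t / |s|) • dz]

lemma gmapFDerivZero_apply (s t a : ℝ) (v : ℝ × ℝ × ℝ) :
    gmapFDerivZero s t a v = ![v.1, Real.cos a * v.1 - t * Real.sin a * v.2.1,
      Real.sin a * v.1 + t * Real.cos a * v.2.1, (1 + t / |s|) * v.2.2] := by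
  ext i; fin_cases i <;> simp [gmapFDerivZero, mul_assoc]

lemma gmapFDerivZero_injective (s : ℝ) {t : ℝ} (ht : 0 < t) (a : ℝ) :
    Function.Injective (gmapFDerivZero s t a) := by
  rw [injective_iff_map_eq_zero]
  rintro ⟨dt, da, dz⟩ hv
  rw [gmapFDerivZero_apply] at hv
  have hdt : dt = 0 := congrFun hv 0
  have e1 : Real.cos a * dt - t * Real.sin a * da = 0 := congrFun hv 1
  have e2 : Real.sin a * dt + t * Real.cos a * da = 0 := congrFun hv 2
  have hdz : (1 + t / |s|) * dz = 0 := congrFun hv 3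
  have hda : t * da = 0 := by
    linear_combination -Real.sin a * e1 + Real.cos a * e2 - t * da * Real.sin_sq_add_cos_sq a
  obtain rfl : da = 0 := (mul_eq_zero.1 hda).resolve_left ht.ne'
  obtain rfl : dz = 0 := (mul_eq_zero.1 hdz).resolve_left (by positivity)
  rw [hdt]; rfl

theorem hasFDerivAt_Gmap_zero {s : ℝ} (hs : s ≠ 0) (t a : ℝ) :
    HasFDerivAt (Gmap s) (gmapFDerivZero s t a) (t, a, 0) := by
  have ht : HasFDerivAt (fun p : ℝ × ℝ × ℝ => p.1) (fst ℝ ℝ (ℝ × ℝ)) (t, a, 0) :=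
    hasFDerivAt_fst
  have ha : HasFDerivAt (fun p : ℝ × ℝ × ℝ => p.2.1) ((fst ℝ ℝ ℝ).comp (snd ℝ ℝ (ℝ × ℝ)))
      (t, a, 0) := hasFDerivAt_snd.fst
  have hz : HasFDerivAt (fun p : ℝ × ℝ × ℝ => p.2.2) ((snd ℝ ℝ ℝ).comp (snd ℝ ℝ (ℝ × ℝ)))
      (t, a, 0) := hasFDerivAt_snd.snd
  have hT := (hasDerivAt_Tfil_zero hs).comp_hasFDerivAt (t, a, 0) hz
  have hε := (hasDerivAt_epsFil_zero hs).comp_hasFDerivAt (t, a, 0) hz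
  have hr := ((hasDerivAt_epsFil_zero hs).sqrt_one_sub_sq_of_eq_zero
    (epsFil_zero s)).comp_hasFDerivAt (t, a, 0) hz
  have hcos := (Real.hasDerivAt_cos a).comp_hasFDerivAt (t, a, 0) ha
  have hsin := (Real.hasDerivAt_sin a).comp_hasFDerivAt (t, a, 0) ha
  refine hasFDerivAt_pi'' fun i => ?_
  fin_cases i <;>
    [refine (hT.add ht).congr_fderiv ?_; refine ((ht.mul hr).mul hcos).congr_fderiv ?_;
      refine ((ht.mul hr).mul hsin).congr_fderiv ?_; refine (hz.add (ht.mul hε)).congr_fderiv ?_] <;>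
    ext <;> simp [gmapFDerivZero_apply, epsFil_zero, div_eq_mul_inv]

/-- Appendix C of the paper: for `t > 0` the total derivative of `G` at `(t, a, 0)`
exists and is an injective linear map `ℝ³ → ℝ⁴`. -/
theorem stmt_9 (s : ℝ) (hs : 0 < s) (t a : ℝ) (ht : 0 < t) :
    ∃ D : ℝ × ℝ × ℝ →L[ℝ] (Fin 4 → ℝ),
      HasFDerivAt (Gmap s) D (t, a, 0) ∧ Function.Injective D :=
  ⟨gmapFDerivZero s t a, hasFDerivAt_Gmap_zero hs.ne' t a, gmapFDerivZero_injective s ht a⟩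
end

section
/- Define F⁻ on {(x⁰, x'; ξ₀, ξ') ∈ ℝ × ℝ³ × ℝ × ℝ³ : ξ' ≠ 0} by F⁻(x⁰, x'; ξ₀, ξ') = (x⁰, x' + x⁰ ξ'/|ξ'|; ξ₀ − |ξ'|, ξ'). Then F⁻ preserves the canonical symplectic form on T*ℝ⁴ ≅ ℝ⁴ × ℝ⁴; equivalently, at every point of its domain the derivative matrix dF⁻ satisfies (dF⁻)ᵀ J (dF⁻) = J, where J is the canonical symplectic matrix (J(δx, δξ) block form: J = [[0, I],[−I, 0]] pairing position and momentum). Moreover, F⁻ maps the set {(0,0; ξ₀, ξ') : ξ' ≠ 0} into itself, and for every t ∈ ℝ, θ ∈ S² and λ < 0 it satisfies F⁻(t, tθ; −λ, λθ) = (t, 0; 0, λθ). -/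
open Matrix

/-- The homogeneous transformation
`F⁻(x⁰, x'; ξ₀, ξ') = (x⁰, x' + x⁰ ξ'/|ξ'|; ξ₀ - |ξ'|, ξ')` of Appendix B. -/
noncomputable def Fminus :
    (ℝ × (Fin 3 → ℝ)) × (ℝ × (Fin 3 → ℝ)) → (ℝ × (Fin 3 → ℝ)) × (ℝ × (Fin 3 → ℝ)) :=
  fun p => ((p.1.1, p.1.2 + (p.1.1 / enorm3 p.2.2) • p.2.2),
            (p.2.1 - enorm3 p.2.2, p.2.2))

/-- The canonical symplectic form `∑ dξᵢ ∧ dxⁱ` on `T*ℝ⁴ ≅ ℝ⁴ × ℝ⁴`, evaluated on a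
pair of tangent vectors `u = (δx, δξ)`, `v = (δy, δη)`:
`ω(u, v) = ⟨δξ, δy⟩ - ⟨δη, δx⟩`. -/
def symp (u v : (ℝ × (Fin 3 → ℝ)) × (ℝ × (Fin 3 → ℝ))) : ℝ :=
  (u.2.1 * v.1.1 + u.2.2 ⬝ᵥ v.1.2) - (v.2.1 * u.1.1 + v.2.2 ⬝ᵥ u.1.2)

/-!
`F⁻` is the shear `(x; ξ) ↦ (x⁰, x' + x⁰ ∇g(ξ'); ξ₀ - g(ξ'), ξ')` attached to `g(ξ') = |ξ'|`,
the canonical transformation with generating function `x·η + x⁰ g(η')`. Its derivative pulls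
`ω` back to `ω` plus `x⁰` times the antisymmetrisation of the Hessian of `g`, which vanishes
because the Hessian is symmetric.
-/

abbrev PhaseSpace := (ℝ × (Fin 3 → ℝ)) × (ℝ × (Fin 3 → ℝ))

lemma sq_enorm3 (v : Fin 3 → ℝ) : enorm3 v ^ 2 = v ⬝ᵥ v := by
  rw [enorm3, Real.sq_sqrt (by positivity)]
  simp [dotProduct, sq]

lemma enorm3_eq_zero_iff {v : Fin 3 → ℝ} : enorm3 v = 0 ↔ v = 0 := by
  rw [← pow_eq_zero_iff two_ne_zero, sq_enorm3, dotProduct_self_eq_zero]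

lemma enorm3_smul (c : ℝ) (v : Fin 3 → ℝ) : enorm3 (c • v) = |c| * enorm3 v := by
  rw [enorm3, enorm3, ← Real.sqrt_sq_eq_abs, ← Real.sqrt_mul (sq_nonneg c)]
  simp [Finset.mul_sum, mul_pow]

lemma hasFDerivAt_enorm3 {v : Fin 3 → ℝ} (hv : v ≠ 0) :
    HasFDerivAt enorm3 ((enorm3 v)⁻¹ • (dotProductBilin ℝ ℝ v).toContinuousLinearMap) v := by
  have hsum : HasFDerivAt (fun w : Fin 3 → ℝ => ∑ i, w i ^ 2)
      (∑ i, (2 * v i) • ContinuousLinearMap.proj (R := ℝ) (φ := fun _ : Fin 3 => ℝ) i) v := by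
    simpa using HasFDerivAt.fun_sum (u := Finset.univ) fun i _ =>
      (hasFDerivAt_apply (𝕜 := ℝ) i v).pow 2
  have hsum_ne : ∑ i, v i ^ 2 ≠ 0 := by
    simpa [dotProduct, ← sq] using dotProduct_self_eq_zero.not.2 hv
  refine (hsum.sqrt hsum_ne).congr_fderiv ?_
  ext w
  simp only [enorm3, one_div, _root_.mul_inv_rev, _root_.smul_apply, _root_.sum_apply,
    ContinuousLinearMap.proj_apply, smul_eq_mul, Finset.mul_sum,
    LinearMap.coe_toContinuousLinearMap', dotProductBilin_apply_apply, dotProduct]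
  exact Finset.sum_congr rfl fun i _ => by ring

lemma hasFDerivAt_radial {v : Fin 3 → ℝ} (hv : v ≠ 0) :
    ∃ A : (Fin 3 → ℝ) →L[ℝ] Fin 3 → ℝ, HasFDerivAt (fun w => (enorm3 w)⁻¹ • w) A v ∧
      ∀ w z, w ⬝ᵥ A z = z ⬝ᵥ A w := by
  have hinv := (hasDerivAt_inv (enorm3_eq_zero_iff.not.2 hv)).comp_hasFDerivAt v
    (hasFDerivAt_enorm3 hv)
  refine ⟨_, hinv.smul (hasFDerivAt_id v), fun w z => ?_⟩
  simp only [_root_.add_apply, _root_.smul_apply, ContinuousLinearMap.smulRight_apply,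
    ContinuousLinearMap.id_apply, Function.comp_apply, LinearMap.coe_toContinuousLinearMap',
    dotProductBilin_apply_apply, smul_eq_mul, dotProduct_add, dotProduct_smul,
    dotProduct_comm w z, dotProduct_comm z v, dotProduct_comm w v]
  ring

def HasSymplecticFDerivAt (f : PhaseSpace → PhaseSpace) (p : PhaseSpace) : Prop :=
  ∃ D : PhaseSpace →L[ℝ] PhaseSpace, HasFDerivAt f D p ∧ ∀ u v, symp (D u) (D v) = symp u v

def shear (g : (Fin 3 → ℝ) → ℝ) (G : (Fin 3 → ℝ) → Fin 3 → ℝ) (p : PhaseSpace) : PhaseSpace :=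
  ((p.1.1, p.1.2 + p.1.1 • G p.2.2), (p.2.1 - g p.2.2, p.2.2))

def shearLin (G : Fin 3 → ℝ) (A : (Fin 3 → ℝ) → Fin 3 → ℝ) (u : PhaseSpace) : PhaseSpace :=
  ((u.1.1, u.1.2 + u.1.1 • G + A u.2.2), (u.2.1 - G ⬝ᵥ u.2.2, u.2.2))

lemma symp_shearLin (G : Fin 3 → ℝ) {A : (Fin 3 → ℝ) → Fin 3 → ℝ}
    (hA : ∀ w z, w ⬝ᵥ A z = z ⬝ᵥ A w) (u v : PhaseSpace) :
    symp (shearLin G A u) (shearLin G A v) = symp u v := by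
  simp only [symp, shearLin, dotProduct_add, dotProduct_smul, smul_eq_mul, hA v.2.2 u.2.2,
    dotProduct_comm _ G]
  ring

lemma hasFDerivAt_shear {g : (Fin 3 → ℝ) → ℝ} {G : (Fin 3 → ℝ) → Fin 3 → ℝ}
    {g' : (Fin 3 → ℝ) →L[ℝ] ℝ} {A : (Fin 3 → ℝ) →L[ℝ] Fin 3 → ℝ} {p : PhaseSpace}
    (hg : HasFDerivAt g g' p.2.2) (hg' : ∀ w, g' w = G p.2.2 ⬝ᵥ w)
    (hG : HasFDerivAt G A p.2.2) :
    ∃ D : PhaseSpace →L[ℝ] PhaseSpace, HasFDerivAt (shear g G) D p ∧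
      ∀ u, D u = shearLin (G p.2.2) (fun w => p.1.1 • A w) u := by
  have hx₀ := (hasFDerivAt_fst (𝕜 := ℝ) (p := p)).fst
  have hx := (hasFDerivAt_fst (𝕜 := ℝ) (p := p)).snd
  have hξ₀ := (hasFDerivAt_snd (𝕜 := ℝ) (p := p)).fst
  have hξ := (hasFDerivAt_snd (𝕜 := ℝ) (p := p)).snd
  refine ⟨_, (hx₀.prodMk (hx.add (hx₀.smul (hG.comp p hξ)))).prodMk
    ((hξ₀.sub (hg.comp p hξ)).prodMk hξ), fun u => ?_⟩
  simp only [shearLin, hg', ContinuousLinearMap.prod_apply, ContinuousLinearMap.comp_apply,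
    ContinuousLinearMap.coe_fst', ContinuousLinearMap.coe_snd', _root_.add_apply,
    _root_.smul_apply, _root_.sub_apply, ContinuousLinearMap.smulRight_apply,
    Function.comp_apply, Prod.mk.injEq, true_and, and_true]
  abel

lemma shear_hasSymplecticFDerivAt {g : (Fin 3 → ℝ) → ℝ} {G : (Fin 3 → ℝ) → Fin 3 → ℝ}
    {g' : (Fin 3 → ℝ) →L[ℝ] ℝ} {A : (Fin 3 → ℝ) →L[ℝ] Fin 3 → ℝ} {p : PhaseSpace}
    (hg : HasFDerivAt g g' p.2.2) (hg' : ∀ w, g' w = G p.2.2 ⬝ᵥ w)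
    (hG : HasFDerivAt G A p.2.2) (hA : ∀ w z, w ⬝ᵥ A z = z ⬝ᵥ A w) :
    HasSymplecticFDerivAt (shear g G) p := by
  obtain ⟨D, hD, hDu⟩ := hasFDerivAt_shear hg hg' hG
  refine ⟨D, hD, fun u v => ?_⟩
  rw [hDu, hDu, symp_shearLin]
  intro w z
  simp only [dotProduct_smul, hA w z]

lemma Fminus_eq_shear : Fminus = shear enorm3 (fun v => (enorm3 v)⁻¹ • v) := by
  ext p <;> simp [Fminus, shear, div_eq_mul_inv, mul_smul]

theorem hasSymplecticFDerivAt_Fminus {p : PhaseSpace} (hp : p.2.2 ≠ 0) :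
    HasSymplecticFDerivAt Fminus p := by
  obtain ⟨A, hA, hA_symm⟩ := hasFDerivAt_radial hp
  rw [Fminus_eq_shear]
  exact shear_hasSymplecticFDerivAt (hasFDerivAt_enorm3 hp) (fun w => by simp) hA hA_symm

lemma Fminus_lightCone {t l : ℝ} {θ : Fin 3 → ℝ} (hθ : enorm3 θ = 1) (hl : l < 0) :
    Fminus ((t, t • θ), (-l, l • θ)) = ((t, 0), (0, l • θ)) := by
  have hnorm : enorm3 (l • θ) = -l := by rw [enorm3_smul, hθ, abs_of_neg hl, mul_one]
  have hcoef : t / -l * l = -t := by field_simp [hl.ne]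
  simp [Fminus, hnorm, smul_smul, hcoef]

/-- Appendix B of the paper: `F⁻` is symplectic on `{ξ' ≠ 0}` (its derivative
preserves the canonical symplectic form), it maps the conormal fibre of the origin
`{(0,0; ξ₀, ξ') : ξ' ≠ 0}` into itself, and it maps the past-frequency light-cone
flowout to the model Lagrangian: `F⁻(t, tθ; -λ, λθ) = (t, 0; 0, λθ)` for `λ < 0`,
`θ ∈ S²`. -/
theorem stmt_10 :
    (∀ p : (ℝ × (Fin 3 → ℝ)) × (ℝ × (Fin 3 → ℝ)), p.2.2 ≠ 0 →
      ∃ D : ((ℝ × (Fin 3 → ℝ)) × (ℝ × (Fin 3 → ℝ))) →L[ℝ] ((ℝ × (Fin 3 → ℝ)) × (ℝ × (Fin 3 → ℝ))), HasFDerivAt Fminus D p ∧ ∀ u v, symp (D u) (D v) = symp u v) ∧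
    (∀ (ξ₀ : ℝ) (ξ' : Fin 3 → ℝ), ξ' ≠ 0 →
      Fminus ((0, 0), (ξ₀, ξ')) = ((0, 0), (ξ₀ - enorm3 ξ', ξ'))) ∧
    (∀ (t l : ℝ) (θ : Fin 3 → ℝ), enorm3 θ = 1 → l < 0 →
      Fminus ((t, t • θ), (-l, l • θ)) = ((t, 0), (0, l • θ))) := by
  exact ⟨fun _ hp => hasSymplecticFDerivAt_Fminus hp, fun _ _ _ => by simp [Fminus],
    fun _ _ _ hθ hl => Fminus_lightCone hθ hl⟩
end
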